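/- Let d ≥ 2, N ≥ 3, j ∈ {2,…,N}, and set d̃ = d^{N−1} − d + 1. Then the map sending the tuple (i_1, (i_k)_{k∈{2,…,N}∖{j}}) ∈ {0,…,d−1}^{N−1} to i_1·d̃ + ∑_{k∈{2,…,N}∖{j}} i_k·d^{N−k} is injective. -/

import Mathlib

/-!
Read the sum `∑_{k ≠ j} i_k d^{N-k}` as a base-`d` numeral with `N - 1` digits whose digit in
position `N - j` is `0`. Raising that digit to `d - 1` keeps it below `d^{N-1}`, so the sum is
less than `d^{N-1} - (d - 1) = d̃`. Hence `i₁` is the quotient by `d̃` and the sum the remainder,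
and the digits `i_k` are recovered by uniqueness of base-`d` expansions.
-/

open Finset

theorem sum_range_mul_pow_lt {b n : ℕ} {c : ℕ → ℕ} (hc : ∀ e < n, c e < b) :
    ∑ e ∈ range n, c e * b ^ e < b ^ n := by
  induction n with
  | zero => simp
  | succ n ih =>
    have hlast : c n * b ^ n + b ^ n ≤ b ^ (n + 1) := by
      rw [pow_succ, ← Nat.succ_mul, mul_comm]
      exact Nat.mul_le_mul_left _ (hc n n.lt_add_one)
    rw [sum_range_succ]
    have := ih fun e he => hc e (he.trans n.lt_add_one)
    omega

theorem sum_range_mul_pow_lt_pow_sub_of_eq_zero {b n m : ℕ} {c : ℕ → ℕ}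
    (hc : ∀ e < n, c e < b) (hm : m < n) (hcm : c m = 0) :
    ∑ e ∈ range n, c e * b ^ e < b ^ n - b + 1 := by
  have hb : 0 < b := hcm ▸ hc m hm
  have hupd := sum_range_mul_pow_lt (b := b) (c := Function.update c m (b - 1)) fun e he => by
    rcases eq_or_ne e m with rfl | hne
    · simpa using hb
    · simpa [hne] using hc e he
  have hm' : m ∈ range n := mem_range.2 hm
  rw [← add_sum_erase _ _ hm', Function.update_self] at hupd
  rw [← add_sum_erase _ _ hm', hcm, zero_mul, zero_add]
  have hrest : ∑ e ∈ (range n).erase m, Function.update c m (b - 1) e * b ^ e =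
      ∑ e ∈ (range n).erase m, c e * b ^ e :=
    sum_congr rfl fun e he => by rw [Function.update_of_ne (ne_of_mem_erase he)]
  have hpow : b - 1 ≤ (b - 1) * b ^ m := Nat.le_mul_of_pos_right _ (pow_pos hb m)
  omega

theorem eq_of_sum_range_mul_pow_eq {b n : ℕ} {c c' : ℕ → ℕ} (hc : ∀ e < n, c e < b)
    (hc' : ∀ e < n, c' e < b)
    (h : ∑ e ∈ range n, c e * b ^ e = ∑ e ∈ range n, c' e * b ^ e) : ∀ e < n, c e = c' e := by
  induction n generalizing c c' with
  | zero => simp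
  | succ n ih =>
    have hb : 0 < b := (hc 0 n.succ_pos).trans_le' (Nat.zero_le _)
    have expand : ∀ d : ℕ → ℕ, ∑ e ∈ range (n + 1), d e * b ^ e =
        d 0 + b * ∑ e ∈ range n, d (e + 1) * b ^ e := fun d => by
      rw [sum_range_succ', mul_sum, pow_zero, mul_one, add_comm]
      exact congrArg (d 0 + ·) (sum_congr rfl fun e _ => by ring)
    rw [expand, expand] at h
    have h0 : c 0 = c' 0 := by
      simpa [Nat.add_mul_mod_self_left, Nat.mod_eq_of_lt (hc 0 n.succ_pos),
        Nat.mod_eq_of_lt (hc' 0 n.succ_pos)] using congrArg (· % b) h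
    have htail := ih (c := fun e => c (e + 1)) (c' := fun e => c' (e + 1))
      (fun e he => hc _ (by omega)) (fun e he => hc' _ (by omega))
      (by rw [h0] at h; exact Nat.eq_of_mul_eq_mul_left hb (by omega))
    intro e he
    cases e with
    | zero => exact h0
    | succ e => exact htail e (by omega)

theorem eq_of_mul_add_eq_mul_add {t a a' r r' : ℕ} (hr : r < t) (hr' : r' < t)
    (h : a * t + r = a' * t + r') : a = a' ∧ r = r' := by
  have ht : 0 < t := (Nat.zero_le r).trans_lt hr
  have hdiv : ∀ a r, r < t → (a * t + r) / t = a := fun a r hr => by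
    rw [mul_comm, Nat.mul_add_div ht, Nat.div_eq_of_lt hr, add_zero]
  have ha : a = a' := by rw [← hdiv a r hr, h, hdiv a' r' hr']
  subst ha
  exact ⟨rfl, by omega⟩

/-- Digit `e` of the numeral: `i_k` sits in position `N - k`, and position `N - j` holds `0`. -/
def erasedDigits (N j : ℕ) (i : ℕ → ℕ) (e : ℕ) : ℕ :=
  if e = N - j then 0 else i (N - e)

theorem sum_erase_Icc_eq_sum_range_erasedDigits {N j : ℕ} (hj : j ∈ Icc 2 N) (d : ℕ)
    (i : ℕ → ℕ) :
    ∑ k ∈ (Icc 2 N).erase j, i k * d ^ (N - k) =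
      ∑ e ∈ range (N - 1), erasedDigits N j i e * d ^ e := by
  have hj' := mem_Icc.1 hj
  rw [← sum_erase (range (N - 1)) (f := fun e => erasedDigits N j i e * d ^ e) (a := N - j)
    (by simp [erasedDigits])]
  refine sum_nbij' (fun k => N - k) (fun e => N - e) ?_ ?_ ?_ ?_ ?_
  all_goals intro x hx
  all_goals simp only [mem_erase, mem_Icc, mem_range, ne_eq] at hx ⊢
  · omega
  · omega
  · omega
  · omega
  · rw [erasedDigits, if_neg (by omega), Nat.sub_sub_self (by omega)]

theorem erasedDigits_lt {N j d : ℕ} {i : ℕ → ℕ} (hd : 0 < d)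
    (hi : ∀ k ∈ (Icc 2 N).erase j, i k < d) {e : ℕ} (he : e < N - 1) :
    erasedDigits N j i e < d := by
  unfold erasedDigits
  split_ifs with hej
  · exact hd
  · exact hi _ (mem_erase.2 ⟨by omega, mem_Icc.2 ⟨by omega, by omega⟩⟩)

theorem stmt13 (d N j : ℕ) (hj : j ∈ Finset.Icc 2 N)
    (i1 i1' : ℕ) (h1 : i1 < d)
    (i i' : ℕ → ℕ)
    (hi : ∀ k ∈ (Finset.Icc 2 N).erase j, i k < d)
    (hi' : ∀ k ∈ (Finset.Icc 2 N).erase j, i' k < d)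
    (heq : i1 * (d ^ (N - 1) - d + 1) +
            ∑ k ∈ (Finset.Icc 2 N).erase j, i k * d ^ (N - k)
        = i1' * (d ^ (N - 1) - d + 1) +
            ∑ k ∈ (Finset.Icc 2 N).erase j, i' k * d ^ (N - k)) :
    i1 = i1' ∧ ∀ k ∈ (Finset.Icc 2 N).erase j, i k = i' k := by
  obtain ⟨hj2, hjN⟩ := mem_Icc.1 hj
  have hd : 0 < d := (Nat.zero_le i1).trans_lt h1
  have hc := fun e (he : e < N - 1) => erasedDigits_lt hd hi he
  have hc' := fun e (he : e < N - 1) => erasedDigits_lt hd hi' he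
  have hzero : ∀ i, erasedDigits N j i (N - j) = 0 := fun i => if_pos rfl
  rw [sum_erase_Icc_eq_sum_range_erasedDigits hj, sum_erase_Icc_eq_sum_range_erasedDigits hj]
    at heq
  obtain ⟨rfl, hsum⟩ := eq_of_mul_add_eq_mul_add
    (sum_range_mul_pow_lt_pow_sub_of_eq_zero hc (by omega) (hzero i))
    (sum_range_mul_pow_lt_pow_sub_of_eq_zero hc' (by omega) (hzero i')) heq
  refine ⟨rfl, fun k hk => ?_⟩
  obtain ⟨hkj, hk2, hkN⟩ : k ≠ j ∧ 2 ≤ k ∧ k ≤ N := by simpa using hk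
  have := eq_of_sum_range_mul_pow_eq hc hc' hsum (N - k) (by omega)
  rwa [erasedDigits, erasedDigits, if_neg (by omega), if_neg (by omega),
    Nat.sub_sub_self hkN] at this
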